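/- arXiv:1909.11207 — 2 statements merged into one kernel-verified Lean document; each statement's English description precedes it below -/
import Mathlib

section
/- Let v_1,…,v_s be i.i.d. random feature vectors and ψ a feature map satisfying Assumption 1 with constant b. For fixed points x_1,…,x_n and a fixed test point x', let K be the kernel matrix, k' ∈ ℝⁿ with k'_i = κ(x_i, x'), and k̃' = Ψ ψ(x'; V_s). Then E_{V_s}[ k̃' k̃'ᵀ ] ⪯ ((s−1)/s)·k'k'ᵀ + (b/s)·K in the Loewner order. -/
/-!
With `g i v = ψ (X i) v * ψ x' v`, the vector `k̃'` is the empirical mean of the i.i.d. vectors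
`g · (v_l)`, so its second moment is `((s-1)/s) E[g] E[g]ᵀ + (1/s) E[g gᵀ]`, and `E[g] = k'`.
The gap to the bound is then `(1/s) (b K - E[g gᵀ]) = (1/s) E[φ φᵀ (b - ψ(x')²)]` with
`φ i = ψ (X i)`: a Gram matrix against a weight that is nonnegative because `ψ² ≤ b`.
-/

open MeasureTheory Matrix

noncomputable section

/-- Kernel matrix of the fixed points. -/
noncomputable def kerMat {d n : ℕ} (κ : (Fin d → ℝ) → (Fin d → ℝ) → ℝ)
    (X : Fin n → (Fin d → ℝ)) : Matrix (Fin n) (Fin n) ℝ :=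
  Matrix.of fun i j => κ (X i) (X j)

/-- Random feature vector ψ(x; V_s). -/
noncomputable def featVec {d s : ℕ} {V : Type*} (ψ : (Fin d → ℝ) → V → ℝ)
    (vs : Fin s → V) (x : Fin d → ℝ) : Fin s → ℝ :=
  fun l => (Real.sqrt s)⁻¹ * ψ x (vs l)

/-- Random feature matrix Ψ ∈ ℝ^{n×s}. -/
noncomputable def featMat {d n s : ℕ} {V : Type*} (ψ : (Fin d → ℝ) → V → ℝ)
    (X : Fin n → (Fin d → ℝ)) (vs : Fin s → V) : Matrix (Fin n) (Fin s) ℝ :=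
  Matrix.of fun i l => (Real.sqrt s)⁻¹ * ψ (X i) (vs l)

/-- Approximate kernel vector k̃' = Ψ ψ(x'; V_s). -/
noncomputable def approxKerVec {d n s : ℕ} {V : Type*} (ψ : (Fin d → ℝ) → V → ℝ)
    (X : Fin n → (Fin d → ℝ)) (x' : Fin d → ℝ) (vs : Fin s → V) : Fin n → ℝ :=
  featMat ψ X vs *ᵥ featVec ψ vs x'

open ProbabilityTheory Finset

lemma approxKerVec_apply {d n s : ℕ} {V : Type*} (ψ : (Fin d → ℝ) → V → ℝ)
    (X : Fin n → Fin d → ℝ) (x' : Fin d → ℝ) (vs : Fin s → V) (i : Fin n) :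
    approxKerVec ψ X x' vs i = (s : ℝ)⁻¹ * ∑ l, ψ (X i) (vs l) * ψ x' (vs l) := by
  have hsqrt : (Real.sqrt s)⁻¹ * (Real.sqrt s)⁻¹ = (s : ℝ)⁻¹ := by
    rw [← mul_inv, Real.mul_self_sqrt (Nat.cast_nonneg s)]
  simp only [approxKerVec, featMat, featVec, mulVec, dotProduct, of_apply, mul_sum]
  exact sum_congr rfl fun l _ => by linear_combination ψ (X i) (vs l) * ψ x' (vs l) * hsqrt

section ProductMoments

variable {ι V : Type*} [Fintype ι] [MeasurableSpace V] {p : Measure V} [IsProbabilityMeasure p]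

lemma integral_pi_comp_eval_mul_comp_eval_of_ne {f g : V → ℝ} (hf : AEStronglyMeasurable f p)
    (hg : AEStronglyMeasurable g p) {l m : ι} (hlm : l ≠ m) :
    ∫ vs : ι → V, f (vs l) * g (vs m) ∂Measure.pi (fun _ => p) =
      (∫ v, f v ∂p) * ∫ v, g v ∂p := by
  have hindep : IndepFun (fun vs : ι → V => vs l) (fun vs => vs m) (Measure.pi fun _ => p) :=
    (iIndepFun_pi (X := fun _ => id) fun _ => aemeasurable_id).indepFun hlm
  rw [hindep.integral_fun_comp_mul_comp (measurable_pi_apply l).aemeasurable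
      (measurable_pi_apply m).aemeasurable
      (by rwa [(measurePreserving_eval _ l).map_eq]) (by rwa [(measurePreserving_eval _ m).map_eq]),
    integral_comp_eval hf, integral_comp_eval hg]

lemma integral_pi_mean_mul_mean {s : ℕ} {f g : V → ℝ} (hf : MemLp f 2 p) (hg : MemLp g 2 p) :
    ∫ vs : Fin s → V, ((s : ℝ)⁻¹ * ∑ l, f (vs l)) * ((s : ℝ)⁻¹ * ∑ m, g (vs m))
        ∂Measure.pi (fun _ => p) =
      ((s - 1) / s) * ((∫ v, f v ∂p) * ∫ v, g v ∂p) + (s : ℝ)⁻¹ * ∫ v, f v * g v ∂p := by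
  have hint : ∀ l m : Fin s, Integrable (fun vs : Fin s → V => f (vs l) * g (vs m))
      (Measure.pi fun _ => p) := fun l m =>
    (hf.comp_measurePreserving (measurePreserving_eval _ l)).integrable_mul
      (hg.comp_measurePreserving (measurePreserving_eval _ m))
  have hrow : ∀ l : Fin s, ∫ vs : Fin s → V, ∑ m, f (vs l) * g (vs m) ∂Measure.pi (fun _ => p) =
      ∫ v, f v * g v ∂p + (s - 1) * ((∫ v, f v ∂p) * ∫ v, g v ∂p) := by
    intro l
    have hdiag : ∫ vs : Fin s → V, f (vs l) * g (vs l) ∂Measure.pi (fun _ => p) =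
        ∫ v, f v * g v ∂p :=
      integral_comp_eval (μ := fun _ : Fin s => p) (i := l) (hf.1.mul hg.1)
    rw [integral_finsetSum _ fun m _ => hint l m, ← add_sum_erase _ _ (mem_univ l),
      hdiag, sum_congr rfl fun m hm =>
        integral_pi_comp_eval_mul_comp_eval_of_ne hf.1 hg.1 (ne_of_mem_erase hm).symm,
      sum_const, card_erase_of_mem (mem_univ l), card_univ, Fintype.card_fin, nsmul_eq_mul,
      Nat.cast_pred (Fin.pos l)]
  simp_rw [mul_mul_mul_comm _ (∑ l, f _), sum_mul_sum]
  rw [integral_const_mul,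
    integral_finsetSum _ fun l _ => integrable_finsetSum _ fun m _ => hint l m]
  simp_rw [hrow, sum_const, card_univ, Fintype.card_fin, nsmul_eq_mul]
  rcases eq_or_ne (s : ℝ) 0 with hs | hs
  · -- `(0 : ℝ)⁻¹ = 0`, so for `s = 0` both sides vanish.
    simp [hs]
  · field_simp
    ring

end ProductMoments

lemma Matrix.posSemidef_of_integral_mul_mul_weight {ι Ω : Type*} [Fintype ι] [MeasurableSpace Ω]
    {μ : Measure Ω} (φ : ι → Ω → ℝ) {w : Ω → ℝ} (hw : 0 ≤ᵐ[μ] w)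
    (hint : ∀ i j, Integrable (fun ω => φ i ω * φ j ω * w ω) μ) :
    (Matrix.of fun i j => ∫ ω, φ i ω * φ j ω * w ω ∂μ).PosSemidef := by
  refine posSemidef_iff_dotProduct_mulVec.2 ⟨?_, fun x => ?_⟩
  · ext i j
    simp only [conjTranspose_apply, of_apply, star_trivial]
    exact integral_congr_ae (.of_forall fun ω => by ring)
  · have hterm : ∀ i j, Integrable (fun ω => x i * x j * (φ i ω * φ j ω * w ω)) μ :=
      fun i j => (hint i j).const_mul _
    have hquad : star x ⬝ᵥ (Matrix.of fun i j => ∫ ω, φ i ω * φ j ω * w ω ∂μ) *ᵥ x =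
        ∫ ω, (∑ i, x i * φ i ω) ^ 2 * w ω ∂μ := calc
      _ = ∑ i, ∑ j, ∫ ω, x i * x j * (φ i ω * φ j ω * w ω) ∂μ := by
        simp only [dotProduct, mulVec, of_apply, star_trivial, mul_sum, integral_const_mul]
        exact sum_congr rfl fun i _ => sum_congr rfl fun j _ => by ring
      _ = ∫ ω, ∑ i, ∑ j, x i * x j * (φ i ω * φ j ω * w ω) ∂μ := by
        rw [integral_finsetSum _ fun i _ => integrable_finsetSum _ fun j _ => hterm i j]
        exact sum_congr rfl fun i _ => (integral_finsetSum _ fun j _ => hterm i j).symm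
      _ = _ := integral_congr_ae (.of_forall fun ω => by
        rw [sq, sum_mul_sum, sum_mul]
        exact sum_congr rfl fun i _ => by rw [sum_mul]; exact sum_congr rfl fun j _ => by ring)
    rw [hquad]
    exact integral_nonneg_of_ae (hw.mono fun ω hω => mul_nonneg (sq_nonneg _) hω)

theorem approx_ker_vec_second_moment_loewner_bound_general
    {d n s : ℕ} {V : Type*} [MeasurableSpace V]
    (p : Measure V) [IsProbabilityMeasure p]
    (ψ : (Fin d → ℝ) → V → ℝ) (hm : ∀ x, Measurable (ψ x))
    (κ : (Fin d → ℝ) → (Fin d → ℝ) → ℝ)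
    (b : ℝ)
    (hunbias : ∀ x x', ∫ v, ψ x v * ψ x' v ∂p = κ x x')
    (hbound : ∀ᵐ v ∂p, ∀ x, (ψ x v) ^ 2 ≤ b)
    (X : Fin n → (Fin d → ℝ)) (x' : Fin d → ℝ) :
    ((((s : ℝ) - 1) / s) •
        vecMulVec (fun i => κ (X i) x') (fun i => κ (X i) x') +
        (b / s) • kerMat κ X -
      Matrix.of (fun i j =>
        ∫ vs : Fin s → V,
          (vecMulVec (approxKerVec ψ X x' vs) (approxKerVec ψ X x' vs)) i j
          ∂(Measure.pi fun _ : Fin s => p))).PosSemidef := by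
  have hψ : ∀ x, MemLp (ψ x) ⊤ p := fun x => memLp_top_of_bound (hm x).aestronglyMeasurable _
    (hbound.mono fun v hv => Real.abs_le_sqrt (hv x))
  have hψψ : ∀ x y, MemLp (fun v => ψ x v * ψ y v) ⊤ p := fun x y => (hψ y).mul' (hψ x)
  have hsecond : ∀ i j, ∫ vs : Fin s → V, approxKerVec ψ X x' vs i * approxKerVec ψ X x' vs j
      ∂(Measure.pi fun _ => p) = ((s - 1) / s) * (κ (X i) x' * κ (X j) x') +
        (s : ℝ)⁻¹ * ∫ v, (ψ (X i) v * ψ x' v) * (ψ (X j) v * ψ x' v) ∂p := by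
    intro i j
    simp_rw [approxKerVec_apply]
    rw [integral_pi_mean_mul_mean ((hψψ _ _).mono_exponent le_top)
      ((hψψ _ _).mono_exponent le_top), hunbias, hunbias]
  have hweighted : ∀ i j, b * κ (X i) (X j) - ∫ v, (ψ (X i) v * ψ x' v) * (ψ (X j) v * ψ x' v) ∂p
      = ∫ v, ψ (X i) v * ψ (X j) v * (b - ψ x' v ^ 2) ∂p := by
    intro i j
    rw [← hunbias, ← integral_const_mul, ← integral_sub
      (((hψψ _ _).integrable le_top).const_mul b) (((hψψ _ _).mul' (hψψ _ _)).integrable le_top)]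
    exact integral_congr_ae (.of_forall fun v => by ring)
  have hweight : 0 ≤ᵐ[p] fun v => b - ψ x' v ^ 2 := hbound.mono fun v hv => sub_nonneg.2 (hv x')
  have hint : ∀ i j, Integrable (fun v => ψ (X i) v * ψ (X j) v * (b - ψ x' v ^ 2)) p :=
    fun i j => ((((memLp_const b).sub (hψψ x' x')).mul' (hψψ (X i) (X j))).integrable le_top).congr
      (.of_forall fun v => by simp only [Pi.sub_apply]; ring)
  convert ((posSemidef_of_integral_mul_mul_weight (fun i => ψ (X i)) hweight hint).smul
    (inv_nonneg.2 (Nat.cast_nonneg s : (0 : ℝ) ≤ s))) using 1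
  ext i j
  simp only [Matrix.sub_apply, Matrix.add_apply, Matrix.smul_apply, of_apply, vecMulVec_apply,
    kerMat, smul_eq_mul, hsecond, ← hweighted]
  ring

/-- E_{V_s}[k̃'k̃'ᵀ] ⪯ ((s−1)/s)·k'k'ᵀ + (b/s)·K. -/
theorem approx_ker_vec_second_moment_loewner_bound
    {d n s : ℕ} (hs : 0 < s) {V : Type*} [MeasurableSpace V]
    (p : Measure V) [IsProbabilityMeasure p]
    (ψ : (Fin d → ℝ) → V → ℝ) (hm : ∀ x, Measurable (ψ x))
    (κ : (Fin d → ℝ) → (Fin d → ℝ) → ℝ)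
    (b : ℝ) (hb : 0 < b)
    (hunbias : ∀ x x', ∫ v, ψ x v * ψ x' v ∂p = κ x x')
    (hbound : ∀ᵐ v ∂p, ∀ x, (ψ x v) ^ 2 ≤ b)
    (X : Fin n → (Fin d → ℝ)) (x' : Fin d → ℝ) :
    ((((s : ℝ) - 1) / s) •
        vecMulVec (fun i => κ (X i) x') (fun i => κ (X i) x') +
        (b / s) • kerMat κ X -
      Matrix.of (fun i j =>
        ∫ vs : Fin s → V,
          (vecMulVec (approxKerVec ψ X x' vs) (approxKerVec ψ X x' vs)) i j
          ∂(Measure.pi fun _ : Fin s => p))).PosSemidef :=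
  approx_ker_vec_second_moment_loewner_bound_general p ψ hm κ b hunbias hbound X x'
end
end

section
/- Let v_1,…,v_s be i.i.d. random feature vectors and ψ a feature map satisfying Assumption 1 with constant b. For fixed points x_1,…,x_n, a fixed test point x', any y ∈ ℝⁿ and λ > 0, with k'_i = κ(x_i,x') and k̃' = Ψ ψ(x'; V_s), it holds that E_{V_s}[ ( (k̃' − k')ᵀ (K + nλ I_n)^{-1} y )² ] ≤ (b/s)·‖K^{1/2}(K + nλ I_n)^{-1} y‖₂². -/
/-!
The error `(k̃' - k')ᵀ z` is the centred empirical mean of `s` i.i.d. copies of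
`G(v) = (∑ᵢ zᵢ ψ(xᵢ; v)) ψ(x'; v)`, whose mean is `k'ᵀ z` by unbiasedness. Its second moment is
therefore `Var G / s ≤ E[G²] / s`, and `E[G²] ≤ b E[(∑ᵢ zᵢ ψ(xᵢ; v))²] = b zᵀ K z` by the bound
`ψ² ≤ b` and unbiasedness again.
-/

open MeasureTheory Matrix

noncomputable section

open ProbabilityTheory
open scoped ENNReal

section SampleMean

variable {Ω : Type*} [MeasurableSpace Ω] {μ : Measure Ω} [IsProbabilityMeasure μ] {s : ℕ}

def sampleMean (G : Ω → ℝ) (ω : Fin s → Ω) : ℝ :=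
  (s : ℝ)⁻¹ * ∑ l, G (ω l)

lemma integral_sampleMean_pi {G : Ω → ℝ} (hs : s ≠ 0) (hG : Integrable G μ) :
    ∫ ω, sampleMean G ω ∂Measure.pi (fun _ : Fin s => μ) = μ[G] := by
  have hG_eval (l : Fin s) :
      Integrable (fun ω : Fin s → Ω => G (ω l)) (Measure.pi fun _ => μ) :=
    integrable_comp_eval hG
  have hG_int (l : Fin s) : ∫ ω : Fin s → Ω, G (ω l) ∂Measure.pi (fun _ => μ) = μ[G] :=
    integral_comp_eval (μ := fun _ => μ) hG.aestronglyMeasurable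
  unfold sampleMean
  rw [integral_const_mul, integral_finsetSum _ fun l _ => hG_eval l]
  simp only [hG_int, Finset.sum_const, Finset.card_univ, Fintype.card_fin, nsmul_eq_mul]
  field_simp

lemma variance_sampleMean_pi {G : Ω → ℝ} (hG : MemLp G 2 μ) :
    Var[sampleMean G; Measure.pi (fun _ : Fin s => μ)] = Var[G; μ] / s := by
  have hsum : (fun ω : Fin s → Ω => ∑ l, G (ω l)) = ∑ l, fun ω => G (ω l) := by
    ext ω; simp
  unfold sampleMean
  rw [variance_const_mul, hsum, variance_sum_pi fun _ => hG]
  simp only [Finset.sum_const, Finset.card_univ, Fintype.card_fin, nsmul_eq_mul]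
  rcases eq_or_ne s 0 with rfl | hs
  · simp
  · field_simp

lemma integral_sq_sampleMean_sub_integral {G : Ω → ℝ} (hs : s ≠ 0) (hG : MemLp G 2 μ) :
    ∫ ω, (sampleMean G ω - μ[G]) ^ 2 ∂Measure.pi (fun _ : Fin s => μ) = Var[G; μ] / s := by
  have hmeas : AEMeasurable (sampleMean G) (Measure.pi fun _ : Fin s => μ) :=
    (Finset.aemeasurable_fun_sum _ fun l _ =>
      hG.aestronglyMeasurable.aemeasurable.comp_quasiMeasurePreserving
        (Measure.quasiMeasurePreserving_eval _ l)).const_mul _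
  rw [← variance_sampleMean_pi hG, variance_eq_integral hmeas,
    integral_sampleMean_pi hs (hG.integrable one_le_two)]

end SampleMean

lemma approxKerVec_dotProduct {d n s : ℕ} {V : Type*} (ψ : (Fin d → ℝ) → V → ℝ)
    (X : Fin n → Fin d → ℝ) (x' : Fin d → ℝ) (vs : Fin s → V) (z : Fin n → ℝ) :
    approxKerVec ψ X x' vs ⬝ᵥ z = sampleMean (fun v => (∑ i, z i * ψ (X i) v) * ψ x' v) vs := by
  have hsqrt : (√(s : ℝ))⁻¹ * (√(s : ℝ))⁻¹ = (s : ℝ)⁻¹ := by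
    rw [← mul_inv, Real.mul_self_sqrt (Nat.cast_nonneg s)]
  simp only [approxKerVec, featMat, featVec, sampleMean, dotProduct, mulVec, of_apply,
    Finset.sum_mul, Finset.mul_sum]
  rw [Finset.sum_comm]
  refine Finset.sum_congr rfl fun _ _ => Finset.sum_congr rfl fun _ _ => ?_
  rw [← hsqrt]
  ring

section FeatureMap

variable {E V ι : Type*} [Fintype ι] [MeasurableSpace V] {p : Measure V}
  {ψ : E → V → ℝ} {κ : E → E → ℝ}

lemma memLp_top_of_sq_le {f : V → ℝ} {b : ℝ} (hf : Measurable f)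
    (h : ∀ᵐ v ∂p, f v ^ 2 ≤ b) :
    MemLp f ∞ p :=
  memLp_top_of_bound hf.aestronglyMeasurable (√b)
    (h.mono fun _ hv => (Real.norm_eq_abs _).trans_le (Real.abs_le_sqrt hv))

lemma memLp_top_sum_const_mul (hψ : ∀ x, MemLp (ψ x) ∞ p) (X : ι → E) (z : ι → ℝ) :
    MemLp (fun v => ∑ i, z i * ψ (X i) v) ∞ p :=
  memLp_finsetSum _ fun i _ => (hψ (X i)).const_mul (z i)

lemma integral_sum_const_mul_mul_of_unbiased [IsFiniteMeasure p]
    (hψ : ∀ x, MemLp (ψ x) ∞ p) (hunbias : ∀ x x', ∫ v, ψ x v * ψ x' v ∂p = κ x x')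
    (X : ι → E) (z : ι → ℝ) (x : E) :
    ∫ v, (∑ i, z i * ψ (X i) v) * ψ x v ∂p = ∑ i, z i * κ (X i) x := by
  have hint (i : ι) : Integrable (fun v => z i * (ψ (X i) v * ψ x v)) p :=
    (((hψ x).mul' (hψ (X i))).integrable le_top).const_mul (z i)
  simp only [Finset.sum_mul, mul_assoc]
  rw [integral_finsetSum _ fun i _ => hint i]
  simp only [integral_const_mul, hunbias]

lemma integral_sq_mul_le {f g : V → ℝ} {b : ℝ} (hf : MemLp f 2 p)
    (hfg : MemLp (fun v => f v * g v) 2 p) (hg : ∀ᵐ v ∂p, g v ^ 2 ≤ b) :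
    ∫ v, (f v * g v) ^ 2 ∂p ≤ b * ∫ v, f v ^ 2 ∂p := by
  rw [← integral_const_mul]
  refine integral_mono_ae hfg.integrable_sq (hf.integrable_sq.const_mul b) ?_
  filter_upwards [hg] with v hv
  rw [mul_pow, mul_comm]
  exact mul_le_mul_of_nonneg_right hv (sq_nonneg _)

end FeatureMap

lemma integral_sum_const_mul_sq_of_unbiased {d n : ℕ} {V : Type*} [MeasurableSpace V]
    {p : Measure V} [IsFiniteMeasure p] {ψ : (Fin d → ℝ) → V → ℝ}
    {κ : (Fin d → ℝ) → (Fin d → ℝ) → ℝ} (hψ : ∀ x, MemLp (ψ x) ∞ p)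
    (hunbias : ∀ x x', ∫ v, ψ x v * ψ x' v ∂p = κ x x')
    (X : Fin n → Fin d → ℝ) (z : Fin n → ℝ) :
    ∫ v, (∑ i, z i * ψ (X i) v) ^ 2 ∂p = z ⬝ᵥ (kerMat κ X *ᵥ z) := by
  have hint (j : Fin n) : Integrable (fun v => z j * ((∑ i, z i * ψ (X i) v) * ψ (X j) v)) p :=
    (((hψ (X j)).mul' (memLp_top_sum_const_mul hψ X z)).integrable le_top).const_mul (z j)
  have hsq (v : V) :
      (∑ i, z i * ψ (X i) v) ^ 2 = ∑ j, z j * ((∑ i, z i * ψ (X i) v) * ψ (X j) v) := by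
    rw [sq, Finset.mul_sum]
    exact Finset.sum_congr rfl fun j _ => by ring
  simp only [hsq]
  rw [integral_finsetSum _ fun j _ => hint j]
  simp only [integral_const_mul, integral_sum_const_mul_mul_of_unbiased hψ hunbias]
  simp only [dotProduct, mulVec, kerMat, of_apply, Finset.mul_sum]
  rw [Finset.sum_comm]
  exact Finset.sum_congr rfl fun _ _ => Finset.sum_congr rfl fun _ _ => by ring

/-- `‖K^{1/2} z‖₂²` appears as `z ⬝ᵥ (K *ᵥ z)`. -/
theorem expected_ker_vec_error_bound_general
    {d n s : ℕ} (hs : 0 < s) {V : Type*} [MeasurableSpace V]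
    (p : Measure V) [IsProbabilityMeasure p]
    (ψ : (Fin d → ℝ) → V → ℝ) (hm : ∀ x, Measurable (ψ x))
    (κ : (Fin d → ℝ) → (Fin d → ℝ) → ℝ)
    (b : ℝ)
    (hunbias : ∀ x x', ∫ v, ψ x v * ψ x' v ∂p = κ x x')
    (hbound : ∀ᵐ v ∂p, ∀ x, (ψ x v) ^ 2 ≤ b)
    (X : Fin n → (Fin d → ℝ)) (x' : Fin d → ℝ)
    (y : Fin n → ℝ) (lam : ℝ) :
    (∫ vs : Fin s → V,
        ((approxKerVec ψ X x' vs - fun i => κ (X i) x') ⬝ᵥ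
          ((kerMat κ X + ((n : ℝ) * lam) • (1 : Matrix (Fin n) (Fin n) ℝ))⁻¹ *ᵥ y)) ^ 2
        ∂(Measure.pi fun _ : Fin s => p)) ≤
      b / s *
        ((((kerMat κ X + ((n : ℝ) * lam) • (1 : Matrix (Fin n) (Fin n) ℝ))⁻¹ *ᵥ y) ⬝ᵥ
          (kerMat κ X *ᵥ
            ((kerMat κ X + ((n : ℝ) * lam) • (1 : Matrix (Fin n) (Fin n) ℝ))⁻¹ *ᵥ y)))) := by
  set z := (kerMat κ X + ((n : ℝ) * lam) • (1 : Matrix (Fin n) (Fin n) ℝ))⁻¹ *ᵥ y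
  have hψ (x : Fin d → ℝ) : MemLp (ψ x) ∞ p :=
    memLp_top_of_sq_le (hm x) (hbound.mono fun _ hv => hv x)
  set u := fun v => ∑ i, z i * ψ (X i) v
  set G := fun v => u v * ψ x' v
  have hu_top : MemLp u ∞ p := memLp_top_sum_const_mul hψ X z
  have hu : MemLp u 2 p := hu_top.mono_exponent le_top
  have hG : MemLp G 2 p := ((hψ x').mul' hu_top).mono_exponent le_top
  have herror (vs : Fin s → V) :
      (approxKerVec ψ X x' vs - fun i => κ (X i) x') ⬝ᵥ z = sampleMean G vs - p[G] := by
    rw [sub_dotProduct, approxKerVec_dotProduct,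
      integral_sum_const_mul_mul_of_unbiased hψ hunbias, dotProduct_comm]
    rfl
  calc _ = Var[G; p] / s := by
        simp_rw [herror]; exact integral_sq_sampleMean_sub_integral hs.ne' hG
    _ ≤ (∫ v, G v ^ 2 ∂p) / s := by
        gcongr; exact variance_le_expectation_sq hG.aestronglyMeasurable
    _ ≤ b * (∫ v, u v ^ 2 ∂p) / s := by
        gcongr; exact integral_sq_mul_le hu hG (hbound.mono fun _ hv => hv x')
    _ = _ := by rw [integral_sum_const_mul_sq_of_unbiased hψ hunbias]; ring

/-- E_{V_s}[((k̃' − k')ᵀ(K + nλI)⁻¹y)²] ≤ (b/s)·‖K^{1/2}(K + nλI)⁻¹y‖₂²,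
where ‖K^{1/2}z‖₂² is written as zᵀKz (K is symmetric PSD). -/
theorem expected_ker_vec_error_bound
    {d n s : ℕ} (hs : 0 < s) {V : Type*} [MeasurableSpace V]
    (p : Measure V) [IsProbabilityMeasure p]
    (ψ : (Fin d → ℝ) → V → ℝ) (hm : ∀ x, Measurable (ψ x))
    (κ : (Fin d → ℝ) → (Fin d → ℝ) → ℝ)
    (b : ℝ) (hb : 0 < b)
    (hunbias : ∀ x x', ∫ v, ψ x v * ψ x' v ∂p = κ x x')
    (hbound : ∀ᵐ v ∂p, ∀ x, (ψ x v) ^ 2 ≤ b)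
    (X : Fin n → (Fin d → ℝ)) (x' : Fin d → ℝ)
    (y : Fin n → ℝ) (lam : ℝ) (hlam : 0 < lam) :
    (∫ vs : Fin s → V,
        ((approxKerVec ψ X x' vs - fun i => κ (X i) x') ⬝ᵥ
          ((kerMat κ X + ((n : ℝ) * lam) • (1 : Matrix (Fin n) (Fin n) ℝ))⁻¹ *ᵥ y)) ^ 2
        ∂(Measure.pi fun _ : Fin s => p)) ≤
      b / s *
        ((((kerMat κ X + ((n : ℝ) * lam) • (1 : Matrix (Fin n) (Fin n) ℝ))⁻¹ *ᵥ y) ⬝ᵥ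
          (kerMat κ X *ᵥ
            ((kerMat κ X + ((n : ℝ) * lam) • (1 : Matrix (Fin n) (Fin n) ℝ))⁻¹ *ᵥ y)))) :=
  expected_ker_vec_error_bound_general hs p ψ hm κ b hunbias hbound X x' y lam
end
end
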